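/- The paper's Lemma computing the left differential of F_ξ(g) = ⟨ξ, log g⟩, in its algebraic form: let A be a unital Banach algebra over ℝ, and let x, a ∈ A with ‖ad(x)‖ < 2π (operator norm of ad(x)(b) = xb − bx). Let ã := Σ_{m≥0} (B_m/m!) · ad(x)^m(a), where B_m are the Bernoulli numbers with exponential generating function z/(e^z − 1) (so B_0 = 1, B_1 = −1/2); the series converges since ‖ad(x)‖ < 2π. Then a · exp(x) = Σ_{n≥1} (1/n!) · Σ_{k=0}^{n−1} x^k ã x^{n−1−k}. (In the paper's notation, ã = f(−½ ad x)(a) with f(z) = z e^z / sinh z, and ã is the derivative at ε = 0 of log(exp(εa)·exp(x)).) -/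

import Mathlib

open scoped Real

/-- `ad(x) : A → A`, `b ↦ xb − bx`, as a bounded linear operator. -/
noncomputable def adOp (A : Type*) [NormedRing A] [NormedAlgebra ℝ A] (x : A) : A →L[ℝ] A :=
  ContinuousLinearMap.mul ℝ A x - (ContinuousLinearMap.mul ℝ A).flip x

/-!
Let `L` and `R` be left and right multiplication by `x`, so that `T := ad x = L - R` commutes
with `R`. In the Banach algebra of operators on `A` put `g(T) = Σ T^m / (m+1)!` (that is,
`(e^T - 1) / T`) and `f(T) = Σ B_l T^l / l!`; the defining recursion of the Bernoulli numbers
says `g(T) f(T) = 1`. Expanding `L^k = (T + R)^k` binomially gives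
`Σ_m (1/(m+1)!) Σ_k L^k R^(m-k) = g(T) exp R`. Multiplying on the right by `f(T)`, which commutes
with `exp R`, and applying to `a` yields the claim, since `ã = f(T) a` and `exp R a = a exp x`.
The series `f(T)` converges because `|B_l| / l! ≤ 4 / (2π)^l`, which for even `l` follows from
`ζ(l) ≤ ζ(2) < 2`.
-/

open Finset NormedSpace
open scoped Nat

theorem Commute.sum_range_add_pow_mul_pow {S : Type*} [Semiring S] {t v : S}
    (h : Commute t v) (d : ℕ) :
    ∑ k ∈ range (d + 1), (t + v) ^ k * v ^ (d - k)
      = ∑ m ∈ range (d + 1), (d + 1).choose (m + 1) • (t ^ m * v ^ (d - m)) := by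
  have expand : ∀ k ∈ range (d + 1), (t + v) ^ k * v ^ (d - k)
      = ∑ m ∈ range (k + 1), k.choose m • (t ^ m * v ^ (d - m)) := by
    intro k hk
    rw [h.add_pow, sum_mul]
    refine sum_congr rfl fun m hm => ?_
    have hdm : d - m = (k - m) + (d - k) := by
      simp only [mem_range] at hk hm; omega
    rw [hdm, pow_add, nsmul_eq_mul', mul_assoc, mul_assoc, mul_assoc, mul_assoc, Nat.cast_comm]
  simp_rw [sum_congr rfl expand, range_eq_Ico]
  rw [← sum_Ico_Ico_comm]
  refine sum_congr rfl fun m _ => ?_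
  rw [← sum_smul, Ico_add_one_right_eq_Icc, Nat.sum_Icc_choose]

theorem sum_range_inv_factorial_succ_mul_bernoulli_div_factorial (n : ℕ) :
    ∑ k ∈ range (n + 1), ((k + 1)! : ℝ)⁻¹ * ((bernoulli (n - k) : ℝ) / (n - k)!)
      = if n = 0 then 1 else 0 := by
  have term : ∀ j ∈ range (n + 1),
      ((n - j + 1)! : ℝ)⁻¹ * ((bernoulli (n - (n - j)) : ℝ) / (n - (n - j))!)
        = (((n + 1).choose j * bernoulli j : ℚ) : ℝ) / (n + 1)! := by
    intro j hj
    have hj : j ≤ n := Nat.lt_succ_iff.mp (mem_range.mp hj)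
    rw [Nat.sub_sub_self hj, Rat.cast_mul, Rat.cast_natCast,
      Nat.cast_choose ℝ (by omega : j ≤ n + 1), show n + 1 - j = n - j + 1 by omega]
    field_simp
  rw [← sum_range_reflect, add_tsub_cancel_right, sum_congr rfl term, ← sum_div, ← Rat.cast_sum,
    sum_bernoulli]
  split_ifs <;> simp_all

theorem tsum_one_div_nat_pow_two_mul_le_two {k : ℕ} (hk : k ≠ 0) :
    ∑' n : ℕ, 1 / (n : ℝ) ^ (2 * k) ≤ 2 := by
  have hle : ∀ n : ℕ, 1 / (n : ℝ) ^ (2 * k) ≤ 1 / (n : ℝ) ^ 2 := fun n => by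
    simp only [one_div, ← inv_pow]
    exact pow_le_pow_of_le_one (by positivity) (Nat.cast_inv_le_one n) (by omega)
  calc ∑' n : ℕ, 1 / (n : ℝ) ^ (2 * k) ≤ ∑' n : ℕ, 1 / (n : ℝ) ^ 2 :=
        (hasSum_zeta_nat hk).summable.tsum_le_tsum hle hasSum_zeta_two.summable
    _ = π ^ 2 / 6 := hasSum_zeta_two.tsum_eq
    _ ≤ 2 := by nlinarith [Real.pi_lt_d2, Real.pi_pos]

theorem abs_bernoulli_div_factorial_le (l : ℕ) :
    |(bernoulli l : ℝ) / l !| ≤ 4 / (2 * π) ^ l := by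
  rcases l.even_or_odd' with ⟨k, rfl | rfl⟩
  · rcases eq_or_ne k 0 with rfl | hk
    · norm_num
    have hζ := (hasSum_zeta_nat hk).tsum_eq
    have htwo : (2 : ℝ) ^ (2 * k) = 2 * 2 ^ (2 * k - 1) := by
      rw [← pow_succ' (2 : ℝ)]; congr 1; omega
    rw [le_div_iff₀ (by positivity)]
    calc |(bernoulli (2 * k) : ℝ) / (2 * k)!| * (2 * π) ^ (2 * k)
        = 2 * |∑' n : ℕ, 1 / (n : ℝ) ^ (2 * k)| := by
          rw [hζ, mul_pow, htwo, mul_div_assoc, abs_mul, abs_mul, abs_mul, abs_pow, abs_neg,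
            abs_one, one_pow, abs_pow, abs_pow, abs_two, abs_of_pos Real.pi_pos]
          ring
      _ ≤ 2 * 2 := by
          rw [abs_of_nonneg (tsum_nonneg fun n => by positivity)]
          gcongr
          exact tsum_one_div_nat_pow_two_mul_le_two hk
      _ = 4 := by norm_num
  · rcases eq_or_ne k 0 with rfl | hk
    · rw [le_div_iff₀ (by positivity)]
      norm_num [bernoulli_one]
      linarith [Real.pi_lt_four]
    · rw [bernoulli_eq_zero_of_odd (odd_two_mul_add_one k) (by omega)]
      simp only [Rat.cast_zero, zero_div, abs_zero]
      positivity

section PowerSeries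

variable {E : Type*} [NormedRing E] [NormedAlgebra ℝ E]

theorem summable_norm_smul_pow {c : ℕ → ℝ} {T : E} (h : Summable fun n => |c n| * ‖T‖ ^ n) :
    Summable fun n => ‖c n • T ^ n‖ := by
  refine h.of_norm_bounded_eventually_nat ?_
  filter_upwards [Filter.eventually_gt_atTop 0] with n hn
  rw [norm_norm, norm_smul, Real.norm_eq_abs]
  gcongr
  exact norm_pow_le' T hn

theorem summable_norm_inv_factorial_succ_smul_pow (T : E) :
    Summable fun m => ‖((m + 1)! : ℝ)⁻¹ • T ^ m‖ := by
  refine summable_norm_smul_pow ((Real.summable_pow_div_factorial ‖T‖).of_nonneg_of_le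
    (fun m => by positivity) fun m => ?_)
  rw [abs_of_pos (by positivity), div_eq_inv_mul]
  gcongr
  omega

theorem summable_norm_bernoulli_smul_pow {T : E} (hT : ‖T‖ < 2 * π) :
    Summable fun l => ‖((bernoulli l : ℝ) / l !) • T ^ l‖ := by
  have hr : ‖T‖ / (2 * π) < 1 := (div_lt_one (by positivity)).mpr hT
  refine summable_norm_smul_pow <| ((summable_geometric_of_lt_one (by positivity) hr).mul_left 4
    |>.of_nonneg_of_le (fun l => by positivity) fun l => ?_)
  calc |(bernoulli l : ℝ) / l !| * ‖T‖ ^ l ≤ 4 / (2 * π) ^ l * ‖T‖ ^ l := by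
        gcongr
        exact abs_bernoulli_div_factorial_le l
    _ = 4 * (‖T‖ / (2 * π)) ^ l := by rw [div_pow]; ring

variable [CompleteSpace E]

theorem hasSum_sum_range_smul_pow_mul_pow {a b : ℕ → ℝ} {S T : E}
    (ha : Summable fun n => ‖a n • S ^ n‖) (hb : Summable fun n => ‖b n • T ^ n‖) :
    HasSum (fun n => ∑ k ∈ range (n + 1), (a k * b (n - k)) • (S ^ k * T ^ (n - k)))
      ((∑' n, a n • S ^ n) * ∑' n, b n • T ^ n) := by
  have hsum := (summable_norm_sum_mul_range_of_summable_norm ha hb).of_norm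
  rw [tsum_mul_tsum_eq_tsum_sum_range_of_summable_norm ha hb]
  simp_rw [smul_mul_smul_comm] at hsum ⊢
  exact hsum.hasSum

theorem hasSum_inv_factorial_succ_smul_sum_add_pow_mul_pow {T R : E} (h : Commute T R) :
    HasSum (fun m => ((m + 1)! : ℝ)⁻¹ • ∑ k ∈ range (m + 1), (T + R) ^ k * R ^ (m - k))
      ((∑' m, ((m + 1)! : ℝ)⁻¹ • T ^ m) * exp R) := by
  rw [← (exp_series_hasSum_exp' (𝕂 := ℝ) R).tsum_eq]
  convert hasSum_sum_range_smul_pow_mul_pow (summable_norm_inv_factorial_succ_smul_pow T)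
    (norm_expSeries_summable' R) using 2 with m
  rw [h.sum_range_add_pow_mul_pow, smul_sum]
  refine sum_congr rfl fun k hk => ?_
  have hk : k ≤ m := Nat.lt_succ_iff.mp (mem_range.mp hk)
  rw [← Nat.cast_smul_eq_nsmul ℝ, smul_smul, Nat.cast_choose ℝ (by omega : k + 1 ≤ m + 1),
    show m + 1 - (k + 1) = m - k by omega]
  field_simp

theorem tsum_inv_factorial_succ_smul_pow_mul_tsum_bernoulli_smul_pow {T : E}
    (hT : ‖T‖ < 2 * π) :
    (∑' m, ((m + 1)! : ℝ)⁻¹ • T ^ m) * ∑' l, ((bernoulli l : ℝ) / l !) • T ^ l = 1 := by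
  refine (hasSum_sum_range_smul_pow_mul_pow (summable_norm_inv_factorial_succ_smul_pow T)
    (summable_norm_bernoulli_smul_pow hT)).unique ?_
  have hcoeff : ∀ n, ∑ k ∈ range (n + 1), (((k + 1)! : ℝ)⁻¹ * ((bernoulli (n - k) : ℝ) / (n - k)!))
      • (T ^ k * T ^ (n - k)) = (if n = 0 then 1 else 0 : ℝ) • T ^ n := fun n => by
    rw [← sum_range_inv_factorial_succ_mul_bernoulli_div_factorial, sum_smul]
    refine sum_congr rfl fun k hk => ?_
    rw [← pow_add, Nat.add_sub_cancel' (Nat.lt_succ_iff.mp (mem_range.mp hk))]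
  simp_rw [hcoeff]
  have h0 : ((if 0 = 0 then 1 else 0 : ℝ) • T ^ 0) = 1 := by simp
  rw [← h0]
  exact hasSum_single 0 fun n hn => by simp [hn]

theorem hasSum_inv_factorial_succ_smul_sum_add_pow_mul_pow_mul_tsum_bernoulli
    {T R : E} (h : Commute T R) (hT : ‖T‖ < 2 * π) :
    HasSum (fun m => (((m + 1)! : ℝ)⁻¹ • ∑ k ∈ range (m + 1), (T + R) ^ k * R ^ (m - k))
      * ∑' l, ((bernoulli l : ℝ) / l !) • T ^ l) (exp R) := by
  have hcomm : Commute (∑' l, ((bernoulli l : ℝ) / l !) • T ^ l) (exp R) :=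
    (Commute.tsum_left _ fun l => (h.pow_left l).smul_left _).exp_right
  have hprod := (hasSum_inv_factorial_succ_smul_sum_add_pow_mul_pow h).mul_right
    (∑' l, ((bernoulli l : ℝ) / l !) • T ^ l)
  rwa [mul_assoc, ← hcomm.eq, ← mul_assoc,
    tsum_inv_factorial_succ_smul_pow_mul_tsum_bernoulli_smul_pow hT, one_mul] at hprod

end PowerSeries

section MulLeftRight

variable {A : Type*} [NormedRing A] [NormedAlgebra ℝ A]

theorem ContinuousLinearMap.mul_pow_apply (x b : A) (k : ℕ) :
    (ContinuousLinearMap.mul ℝ A x ^ k) b = x ^ k * b := by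
  rw [FunLike.coe_pow_eq_iterate]
  exact mul_left_iterate_apply x b

theorem ContinuousLinearMap.flip_mul_pow_apply (x b : A) (k : ℕ) :
    ((ContinuousLinearMap.mul ℝ A).flip x ^ k) b = b * x ^ k := by
  rw [FunLike.coe_pow_eq_iterate]
  exact mul_right_iterate_apply x b

theorem commute_adOp_flip_mul (x : A) :
    Commute (adOp A x) ((ContinuousLinearMap.mul ℝ A).flip x) := by
  have hLR : Commute (ContinuousLinearMap.mul ℝ A x) ((ContinuousLinearMap.mul ℝ A).flip x) := by
    ext b
    simp [mul_assoc]
  exact hLR.sub_left (Commute.refl _)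

theorem exp_flip_mul_apply [CompleteSpace A] (x a : A) :
    exp ((ContinuousLinearMap.mul ℝ A).flip x) a = a * exp x := by
  refine ((exp_series_hasSum_exp' (𝕂 := ℝ) _).mapL (ContinuousLinearMap.apply ℝ A a)).unique ?_
  simp only [ContinuousLinearMap.apply_apply, smul_apply, ContinuousLinearMap.flip_mul_pow_apply]
  simpa only [mul_smul_comm] using (exp_series_hasSum_exp' (𝕂 := ℝ) x).mul_left a

end MulLeftRight

/-- left-differential lemma, algebraic form.  If `‖ad(x)‖ < 2π` then the
series `ã := Σ_{m≥0} (B_m/m!)·ad(x)^m(a)` (Bernoulli numbers, `B_1 = −1/2`) converges,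
and `a · exp(x) = Σ_{n≥1} (1/n!) Σ_{k=0}^{n−1} x^k ã x^{n−1−k}`
(the right-hand series indexed by `m = n − 1`). -/
theorem left_differential_lemma {A : Type*} [NormedRing A] [NormedAlgebra ℝ A]
    [CompleteSpace A] (x a : A) (hx : ‖adOp A x‖ < 2 * π) :
    Summable (fun l : ℕ => (((bernoulli l : ℚ) : ℝ) / (l.factorial : ℝ)) • (adOp A x ^ l) a) ∧
    a * (∑' n : ℕ, ((n.factorial : ℝ))⁻¹ • x ^ n)
      = ∑' m : ℕ, (((m + 1).factorial : ℝ))⁻¹ •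
          ∑ k ∈ Finset.range (m + 1),
            x ^ k * (∑' l : ℕ, (((bernoulli l : ℚ) : ℝ) / (l.factorial : ℝ)) •
              (adOp A x ^ l) a) * x ^ (m - k) := by
  have hF := (summable_norm_bernoulli_smul_pow hx).of_norm.hasSum.mapL
    (ContinuousLinearMap.apply ℝ A a)
  simp only [ContinuousLinearMap.apply_apply, smul_apply] at hF
  refine ⟨hF.summable, ?_⟩
  have key := (hasSum_inv_factorial_succ_smul_sum_add_pow_mul_pow_mul_tsum_bernoulli
    (commute_adOp_flip_mul x) hx).mapL (ContinuousLinearMap.apply ℝ A a)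
  simp only [ContinuousLinearMap.apply_apply] at key
  have hL : adOp A x + (ContinuousLinearMap.mul ℝ A).flip x = ContinuousLinearMap.mul ℝ A x :=
    sub_add_cancel _ _
  rw [(exp_series_hasSum_exp' (𝕂 := ℝ) x).tsum_eq, ← exp_flip_mul_apply, ← key.tsum_eq,
    hF.tsum_eq]
  refine tsum_congr fun m => ?_
  simp only [mul_apply_eq_comp, smul_apply, _root_.sum_apply, hL,
    ContinuousLinearMap.mul_pow_apply, ContinuousLinearMap.flip_mul_pow_apply, mul_assoc]
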